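/- arXiv:2207.02654 — 2 statements merged into one kernel-verified Lean document; each statement's English description precedes it below -/
import Mathlib

section
/- Let X₁,…,Xₙ be ℕ-valued random variables on a probability space with E[X₁] < ∞, S = X₁+⋯+Xₙ and S₋₁ = X₂+⋯+Xₙ, and suppose X₁ and S₋₁ are independent. Then for every t ∈ [0,1), ∑_{k=0}^∞ t^k · E[X₁ · 1_{\{S=k\}}] = t · P'_{X₁}(t) · P_{S₋₁}(t), where P'_{X₁}(t) denotes the derivative at t of the probability generating function of X₁. -/
/-! Splitting `E[X₀ t^S]` along the fibres of `S` gives the left-hand side. Since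
`t^S = t^X₀ · t^S₋₁`, independence factors it as `E[X₀ t^X₀] · E[t^S₋₁]`, and
`E[X₀ t^X₀] = t P'_{X₀}(t)` by differentiating `E[s^X₀]` under the integral sign, the
derivatives `X₀ s^(X₀-1)` being dominated by `X₀` for `|s| ≤ 1`. -/

open MeasureTheory ProbabilityTheory

section PGF

variable {Ω : Type*} [MeasurableSpace Ω] {μ : Measure Ω} [IsFiniteMeasure μ] {Y : Ω → ℕ}

theorem hasDerivAt_integral_pow (hY : Measurable Y) (hint : Integrable (fun ω => (Y ω : ℝ)) μ)
    {t : ℝ} (ht : |t| < 1) :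
    HasDerivAt (fun s : ℝ => ∫ ω, s ^ Y ω ∂μ)
      (∫ ω, (Y ω : ℝ) * t ^ (Y ω - 1) ∂μ) t := by
  have hmeas : ∀ s : ℝ, AEStronglyMeasurable (fun ω => s ^ Y ω) μ := fun s =>
    (by fun_prop : Measurable fun ω => s ^ Y ω).aestronglyMeasurable
  refine (hasDerivAt_integral_of_dominated_loc_of_deriv_le (s := Set.Icc (-1) 1)
    (F' := fun s ω => (Y ω : ℝ) * s ^ (Y ω - 1)) (bound := fun ω => (Y ω : ℝ))
    (Icc_mem_nhds (neg_lt_of_abs_lt ht) (lt_of_abs_lt ht)) (.of_forall hmeas) ?_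
    (by fun_prop : Measurable _).aestronglyMeasurable ?_ hint ?_).2
  · refine Integrable.of_bound (hmeas t) 1 (.of_forall fun ω => ?_)
    rw [norm_pow]
    exact pow_le_one₀ (norm_nonneg t) ht.le
  · refine .of_forall fun ω s hs => ?_
    rw [norm_mul, norm_pow, Real.norm_natCast]
    exact mul_le_of_le_one_right (Nat.cast_nonneg _)
      (pow_le_one₀ (norm_nonneg s) (abs_le.2 hs))
  · exact .of_forall fun ω s _ => hasDerivAt_pow (Y ω) s

theorem mul_deriv_integral_pow (hY : Measurable Y) (hint : Integrable (fun ω => (Y ω : ℝ)) μ)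
    {t : ℝ} (ht : |t| < 1) :
    t * deriv (fun s : ℝ => ∫ ω, s ^ Y ω ∂μ) t = ∫ ω, (Y ω : ℝ) * t ^ Y ω ∂μ := by
  rw [(hasDerivAt_integral_pow hY hint ht).deriv, ← integral_const_mul]
  congr with ω
  cases Y ω with
  | zero => simp
  | succ m => simp only [Nat.cast_succ, Nat.add_sub_cancel, pow_succ]; ring

end PGF

theorem hasSum_setIntegral_fiber {Ω E α : Type*} [MeasurableSpace Ω] {μ : Measure Ω}
    [NormedAddCommGroup E] [NormedSpace ℝ E] [Countable α] [MeasurableSpace α]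
    [MeasurableSingletonClass α] {S : Ω → α} (hS : Measurable S) {f : Ω → E}
    (hf : Integrable f μ) :
    HasSum (fun k => ∫ ω in {ω | S ω = k}, f ω ∂μ) (∫ ω, f ω ∂μ) := by
  have hcover : (⋃ k, {ω | S ω = k}) = Set.univ :=
    Set.iUnion_eq_univ_iff.2 fun ω => ⟨S ω, rfl⟩
  simpa only [hcover, Measure.restrict_univ] using
    hasSum_integral_iUnion (s := fun k => {ω | S ω = k}) (fun k => hS (measurableSet_singleton k))
      (fun k l hkl => Set.disjoint_left.2 fun ω hk hl => hkl (hk.symm.trans hl))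
      (by rwa [hcover, integrableOn_univ])

/-- If `X₁` is independent of `S₋₁ = X₂ + ⋯ + Xₙ`, then for every `t ∈ [0,1)`,
`∑_{k=0}^∞ t^k E[X₁ · 1_{S=k}] = t · P'_{X₁}(t) · P_{S₋₁}(t)`. -/
theorem ogf_expected_allocation_indep
    {Ω : Type*} [MeasurableSpace Ω] (μ : Measure Ω) [IsProbabilityMeasure μ]
    (n : ℕ) (X : Fin (n + 1) → Ω → ℕ) (hX : ∀ i, Measurable (X i))
    (hint : Integrable (fun ω => (X 0 ω : ℝ)) μ)
    (S Sm : Ω → ℕ)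
    (hS : ∀ ω, S ω = ∑ i, X i ω)
    (hSm : ∀ ω, Sm ω = ∑ i : Fin n, X i.succ ω)
    (hindep : IndepFun (X 0) Sm μ)
    (t : ℝ) (ht : t ∈ Set.Ico (0 : ℝ) 1) :
    ∑' k : ℕ, t ^ k * ∫ ω in {ω | S ω = k}, (X 0 ω : ℝ) ∂μ
      = t * deriv (fun s : ℝ => ∫ ω, s ^ (X 0 ω) ∂μ) t * ∫ ω, t ^ (Sm ω) ∂μ := by
  have ht1 : |t| < 1 := abs_lt.2 ⟨by linarith [ht.1], ht.2⟩
  have hS_meas : Measurable S := by rw [funext hS]; fun_prop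
  have hSm_meas : Measurable Sm := by rw [funext hSm]; fun_prop
  have hS_split : ∀ ω, S ω = X 0 ω + Sm ω := fun ω => by rw [hS, hSm, Fin.sum_univ_succ]
  have hint_S : Integrable (fun ω => (X 0 ω : ℝ) * t ^ S ω) μ :=
    hint.mul_bdd (by fun_prop : Measurable fun ω => t ^ S ω).aestronglyMeasurable
      (.of_forall fun ω => by rw [norm_pow]; exact pow_le_one₀ (norm_nonneg t) ht1.le)
  calc ∑' k : ℕ, t ^ k * ∫ ω in {ω | S ω = k}, (X 0 ω : ℝ) ∂μ
      = ∑' k : ℕ, ∫ ω in {ω | S ω = k}, (X 0 ω : ℝ) * t ^ S ω ∂μ := by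
        refine tsum_congr fun k => ?_
        rw [← integral_const_mul]
        refine setIntegral_congr_fun (hS_meas (measurableSet_singleton k)) fun ω hω => ?_
        rw [show S ω = k from hω, mul_comm]
    _ = ∫ ω, ((X 0 ω : ℝ) * t ^ X 0 ω) * t ^ Sm ω ∂μ := by
        rw [(hasSum_setIntegral_fiber hS_meas hint_S).tsum_eq]
        simp_rw [hS_split, pow_add, mul_assoc]
    _ = (∫ ω, (X 0 ω : ℝ) * t ^ X 0 ω ∂μ) * ∫ ω, t ^ Sm ω ∂μ :=
        (hindep.comp (measurable_of_countable fun a : ℕ => (a : ℝ) * t ^ a)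
          (measurable_of_countable fun b : ℕ => t ^ b)).integral_fun_mul_eq_mul_integral
          (by fun_prop : Measurable fun ω => (X 0 ω : ℝ) * t ^ X 0 ω).aestronglyMeasurable
          (by fun_prop : Measurable fun ω => t ^ Sm ω).aestronglyMeasurable
    _ = t * deriv (fun s : ℝ => ∫ ω, s ^ (X 0 ω) ∂μ) t * ∫ ω, t ^ (Sm ω) ∂μ := by
        rw [mul_deriv_integral_pow (hX 0) hint ht1]
end

section
/- Let X₁,…,Xₙ be ℕ-valued random variables on a probability space with S = X₁+⋯+Xₙ and S₋₁ = X₂+⋯+Xₙ. Suppose X₁ has a negative binomial distribution with parameters r > 0 and q ∈ (0,1), i.e. P(X₁ = k) = C(r+k−1, k) q^r (1−q)^k for k ∈ ℕ, and that X₁ is independent of S₋₁. Then for every integer k ≥ 1, E[X₁ · 1_{\{S=k\}}] = r · ∑_{j=1}^{k} (1−q)^j · P(S = k−j). -/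
/-!
Split `{S = k}` according to the value `m` of `X₁`; by independence of `X₁` and `S₋₁`, both
`a k = E[X₁ · 1_{S=k}]` and `f_S(k)` are convolutions of the law `p` of `X₁` with the law of
`S₋₁`, weighted by `m` and by `1` respectively. The negative binomial weights satisfy
`(m + 1) p (m + 1) = (1 - q) (r + m) p m`, which turns into the recursion
`a (k + 1) = (1 - q) (a k + r f_S(k))` with `a 0 = 0`; unrolling it gives the formula.
-/

open MeasureTheory ProbabilityTheory Finset

open scoped Nat

theorem negBinomial_succ_mul_eq {K : Type*} [Field K] [CharZero K] {r C c : K} {p : ℕ → K}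
    (hp : ∀ m, p m = (∏ i ∈ range m, (r + i)) / m ! * C * c ^ m) (m : ℕ) :
    (m + 1) * p (m + 1) = c * ((r + m) * p m) := by
  have hfac : (m ! : K) ≠ 0 := Nat.cast_ne_zero.2 m.factorial_ne_zero
  rw [hp, hp, prod_range_succ, Nat.factorial_succ]
  push_cast
  field_simp
  ring

theorem sum_antidiagonal_succ_mul_of_succ_mul_eq {R : Type*} [CommRing R] {r c : R}
    {p : ℕ → R} (hp : ∀ m : ℕ, (m + 1) * p (m + 1) = c * ((r + m) * p m)) (s : ℕ → R) (k : ℕ) :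
    ∑ x ∈ antidiagonal (k + 1), (x.1 : R) * (p x.1 * s x.2)
      = c * (∑ x ∈ antidiagonal k, (x.1 : R) * (p x.1 * s x.2)
        + r * ∑ x ∈ antidiagonal k, p x.1 * s x.2) := by
  rw [Nat.sum_antidiagonal_succ, mul_sum, ← sum_add_distrib, mul_sum]
  simp only [Nat.cast_zero, zero_mul, zero_add, Nat.cast_succ]
  refine sum_congr rfl fun x _ => ?_
  linear_combination s x.2 * hp x.1

theorem eq_sum_Icc_pow_mul_of_eq_mul_add {R : Type*} [CommSemiring R] {a b : ℕ → R} {c : R}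
    (h0 : a 0 = 0) (hsucc : ∀ k, a (k + 1) = c * (a k + b k)) (k : ℕ) :
    a k = ∑ j ∈ Icc 1 k, c ^ j * b (k - j) := by
  have hrange : ∀ k, a k = ∑ j ∈ range k, c ^ (k - j) * b j := by
    intro k
    induction k with
    | zero => simp [h0]
    | succ k ih =>
      rw [hsucc, ih, sum_range_succ, mul_add, mul_sum, Nat.add_sub_cancel_left, pow_one]
      congr 1
      refine sum_congr rfl fun j hj => ?_
      rw [Nat.sub_add_comm (mem_range.1 hj).le, pow_succ]
      ring
  rw [hrange]
  refine sum_nbij' (k - ·) (k - ·) ?_ ?_ ?_ ?_ ?_ <;> intro j hj <;>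
    simp only [mem_range, mem_Icc] at hj ⊢
  all_goals first | omega | rw [Nat.sub_sub_self hj.le]

section Convolution

variable {Ω : Type*} [MeasurableSpace Ω] {μ : Measure Ω} {X Y : Ω → ℕ}

theorem setIntegral_add_eq_sum_antidiagonal [IsFiniteMeasure μ] (hX : Measurable X)
    (hY : Measurable Y) (hXY : IndepFun X Y μ) (g : ℕ → ℝ) (k : ℕ) :
    ∫ ω in {ω | X ω + Y ω = k}, g (X ω) ∂μ
      = ∑ x ∈ antidiagonal k, g x.1 * (μ.real {ω | X ω = x.1} * μ.real {ω | Y ω = x.2}) := by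
  set A : ℕ × ℕ → Set Ω := fun x => X ⁻¹' {x.1} ∩ Y ⁻¹' {x.2}
  have hA : ∀ x, MeasurableSet (A x) := fun x =>
    (hX (measurableSet_singleton _)).inter (hY (measurableSet_singleton _))
  have hconst : ∀ x, Set.EqOn (fun ω => g (X ω)) (fun _ => g x.1) (A x) := fun x ω hω =>
    congrArg g hω.1
  have hunion : {ω | X ω + Y ω = k} = ⋃ x ∈ antidiagonal k, A x := by
    ext ω
    simp [A]
  have hdisj : (antidiagonal k : Set (ℕ × ℕ)).Pairwise (Function.onFun Disjoint A) := by
    intro x hx y hy hxy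
    refine Set.disjoint_left.2 fun ω hωx hωy => hxy ?_
    simp only [mem_coe, HasAntidiagonal.mem_antidiagonal] at hx hy
    simp only [A, Set.mem_inter_iff, Set.mem_preimage, Set.mem_singleton_iff] at hωx hωy
    ext <;> omega
  rw [hunion, integral_biUnion_finset _ (fun x _ => hA x) hdisj
    fun x _ => (integrableOn_const (measure_ne_top μ _)).congr_fun (hconst x).symm (hA x)]
  refine sum_congr rfl fun x _ => ?_
  rw [setIntegral_congr_fun (hA x) (hconst x), setIntegral_const, smul_eq_mul, mul_comm,
    measureReal_def, hXY.measure_inter_preimage_eq_mul _ _ (measurableSet_singleton _)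
      (measurableSet_singleton _), ENNReal.toReal_mul]
  rfl

theorem measureReal_add_eq_sum_antidiagonal [IsFiniteMeasure μ] (hX : Measurable X)
    (hY : Measurable Y) (hXY : IndepFun X Y μ) (k : ℕ) :
    μ.real {ω | X ω + Y ω = k}
      = ∑ x ∈ antidiagonal k, μ.real {ω | X ω = x.1} * μ.real {ω | Y ω = x.2} := by
  simpa using setIntegral_add_eq_sum_antidiagonal hX hY hXY (fun _ => 1) k

end Convolution

theorem expected_allocation_negative_binomial_general
    {Ω : Type*} [MeasurableSpace Ω] (μ : Measure Ω) [IsProbabilityMeasure μ]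
    (n : ℕ) (X : Fin (n + 1) → Ω → ℕ) (hX : ∀ i, Measurable (X i))
    (S Sm : Ω → ℕ)
    (hS : ∀ ω, S ω = ∑ i, X i ω)
    (hSm : ∀ ω, Sm ω = ∑ i : Fin n, X i.succ ω)
    (r q : ℝ)
    (hnb : ∀ k : ℕ, (μ {ω | X 0 ω = k}).toReal
      = ((∏ i ∈ Finset.range k, (r + i)) / (Nat.factorial k)) * q ^ r * (1 - q) ^ k)
    (hindep : IndepFun (X 0) Sm μ) :
    ∀ k : ℕ, 1 ≤ k →
      ∫ ω in {ω | S ω = k}, (X 0 ω : ℝ) ∂μ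
        = r * ∑ j ∈ Finset.Icc 1 k, (1 - q) ^ j * (μ {ω | S ω = k - j}).toReal := by
  intro k _
  have hS_split : S = fun ω => X 0 ω + Sm ω := funext fun ω => by
    rw [hS, hSm, Fin.sum_univ_succ]
  have hSm_meas : Measurable Sm := by
    rw [funext hSm]
    exact Finset.measurable_sum _ fun i _ => hX i.succ
  set p : ℕ → ℝ := fun m => μ.real {ω | X 0 ω = m}
  set s : ℕ → ℝ := fun m => μ.real {ω | Sm ω = m}
  have hrec := sum_antidiagonal_succ_mul_of_succ_mul_eq
    (negBinomial_succ_mul_eq (p := p) hnb) s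
  simp only [← measureReal_def, hS_split,
    setIntegral_add_eq_sum_antidiagonal (hX 0) hSm_meas hindep,
    measureReal_add_eq_sum_antidiagonal (hX 0) hSm_meas hindep]
  rw [eq_sum_Icc_pow_mul_of_eq_mul_add
    (a := fun k => ∑ x ∈ antidiagonal k, (x.1 : ℝ) * (p x.1 * s x.2)) (by simp) hrec, mul_sum]
  exact sum_congr rfl fun j _ => by ring

/-- If `X₁` has a negative binomial distribution with parameters `r > 0` and
`q ∈ (0,1)`, i.e. `P(X₁ = k) = C(r+k-1, k) q^r (1-q)^k` where
`C(r+k-1,k) = r(r+1)⋯(r+k-1)/k!`, and `X₁` is independent of `S₋₁`, then for every `k ≥ 1`,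
`E[X₁ · 1_{S=k}] = r ∑_{j=1}^{k} (1-q)^j P(S = k-j)`. -/
theorem expected_allocation_negative_binomial
    {Ω : Type*} [MeasurableSpace Ω] (μ : Measure Ω) [IsProbabilityMeasure μ]
    (n : ℕ) (X : Fin (n + 1) → Ω → ℕ) (hX : ∀ i, Measurable (X i))
    (S Sm : Ω → ℕ)
    (hS : ∀ ω, S ω = ∑ i, X i ω)
    (hSm : ∀ ω, Sm ω = ∑ i : Fin n, X i.succ ω)
    (r q : ℝ) (hr : 0 < r) (hq : q ∈ Set.Ioo (0 : ℝ) 1)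
    (hnb : ∀ k : ℕ, (μ {ω | X 0 ω = k}).toReal
      = ((∏ i ∈ Finset.range k, (r + i)) / (Nat.factorial k)) * q ^ r * (1 - q) ^ k)
    (hindep : IndepFun (X 0) Sm μ) :
    ∀ k : ℕ, 1 ≤ k →
      ∫ ω in {ω | S ω = k}, (X 0 ω : ℝ) ∂μ
        = r * ∑ j ∈ Finset.Icc 1 k, (1 - q) ^ j * (μ {ω | S ω = k - j}).toReal :=
  expected_allocation_negative_binomial_general μ n X hX S Sm hS hSm r q hnb hindep
end
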